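/- Let 𝔤 = sl(2,ℝ) with basis e₁, e₂, e₃ as below, and for a, b, c ∈ ℝ with 4ab + c² = 0 let r : 𝔤* → 𝔤 be the skew-symmetric map with r(e₁*) = −a e₂ − b e₃, r(e₂*) = a e₁ − c e₃, r(e₃*) = b e₁ + c e₂, a solution of the classical Yang–Baxter equation. Then the dual bracket on 𝔤* satisfies [e₁*, e₂*]_r = −2a e₁* − c e₂*, [e₁*, e₃*]_r = 2b e₁* − c e₃*, [e₂*, e₃*]_r = 2b e₂* + 2a e₃*; moreover, if (a,b,c) ≠ (0,0,0), then the derived ideal [𝔤*, 𝔤*]_r is abelian of dimension 2, and in particular the Lie algebra (𝔤*, [·,·]_r) is solvable. -/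

import Mathlib

open Module LinearMap

noncomputable section

/-- Index type for the basis of an oscillator Lie algebra:
`Sum.inl 0 ↦ e₋₁`, `Sum.inl 1 ↦ e₀`, `Sum.inr (Sum.inl i) ↦ eᵢ`,
`Sum.inr (Sum.inr i) ↦ ěᵢ`. -/
abbrev OscIdx (n : ℕ) := Fin 2 ⊕ (Fin n ⊕ Fin n)

/-- The oscillator Lie algebra `𝔤_λ`: a real Lie algebra `L` together with a basis
`{e₋₁, e₀, e₁, …, eₙ, ě₁, …, ěₙ}` whose nonzero brackets on basis vectors are
`[e₋₁, eⱼ] = λⱼ ěⱼ`, `[e₋₁, ěⱼ] = −λⱼ eⱼ`, `[eⱼ, ěⱼ] = e₀` (all other brackets of the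
basis vectors vanish or follow by antisymmetry; in particular `e₀` is central). -/
structure OscAlg (n : ℕ) (lam : Fin n → ℝ) (L : Type) [LieRing L] [LieAlgebra ℝ L] where
  basis : Basis (OscIdx n) ℝ L
  bracket_em_e : ∀ j, ⁅basis (Sum.inl 0), basis (Sum.inr (Sum.inl j))⁆
      = lam j • basis (Sum.inr (Sum.inr j))
  bracket_em_f : ∀ j, ⁅basis (Sum.inl 0), basis (Sum.inr (Sum.inr j))⁆
      = -lam j • basis (Sum.inr (Sum.inl j))
  bracket_e_f : ∀ i j, ⁅basis (Sum.inr (Sum.inl i)), basis (Sum.inr (Sum.inr j))⁆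
      = if i = j then basis (Sum.inl 1) else 0
  bracket_e_e : ∀ i j, ⁅basis (Sum.inr (Sum.inl i)), basis (Sum.inr (Sum.inl j))⁆ = 0
  bracket_f_f : ∀ i j, ⁅basis (Sum.inr (Sum.inr i)), basis (Sum.inr (Sum.inr j))⁆ = 0
  bracket_e0 : ∀ x : L, ⁅basis (Sum.inl 1), x⁆ = 0

/-- `0 < λ₁ ≤ … ≤ λₙ`: the standing assumption on the parameters of an oscillator
Lie algebra. -/
def OscParam {n : ℕ} (lam : Fin n → ℝ) : Prop := (∀ i, 0 < lam i) ∧ Monotone lam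

/-- Genericity: `0 < λ₁ < … < λₙ` and `λ_k ≠ λ_i + λ_j` for all `i < j < k`. -/
def IsGeneric {n : ℕ} (lam : Fin n → ℝ) : Prop :=
  (∀ i, 0 < lam i) ∧ StrictMono lam ∧
    ∀ i j k : Fin n, i < j → j < k → lam k ≠ lam i + lam j

namespace OscAlg

variable {n : ℕ} {lam : Fin n → ℝ} {L : Type} [LieRing L] [LieAlgebra ℝ L]

/-- `e₋₁`. -/
def em (B : OscAlg n lam L) : L := B.basis (Sum.inl 0)
/-- `e₀`. -/
def e0 (B : OscAlg n lam L) : L := B.basis (Sum.inl 1)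
/-- `eᵢ`. -/
def e (B : OscAlg n lam L) (i : Fin n) : L := B.basis (Sum.inr (Sum.inl i))
/-- `ěᵢ`. -/
def f (B : OscAlg n lam L) (i : Fin n) : L := B.basis (Sum.inr (Sum.inr i))
/-- `e₋₁*`, an element of the dual basis. -/
def em' (B : OscAlg n lam L) : Dual ℝ L := B.basis.coord (Sum.inl 0)
/-- `e₀*`. -/
def e0' (B : OscAlg n lam L) : Dual ℝ L := B.basis.coord (Sum.inl 1)
/-- `eᵢ*`. -/
def e' (B : OscAlg n lam L) (i : Fin n) : Dual ℝ L := B.basis.coord (Sum.inr (Sum.inl i))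
/-- `ěᵢ*`. -/
def f' (B : OscAlg n lam L) (i : Fin n) : Dual ℝ L := B.basis.coord (Sum.inr (Sum.inr i))

/-- The subspace `S` spanned by the `eᵢ, ěᵢ`. -/
def S (B : OscAlg n lam L) : Submodule ℝ L :=
  Submodule.span ℝ (Set.range B.e ∪ Set.range B.f)

/-- The `2`-form `ω` on `𝔤_λ`, viewed as a linear map `𝔤_λ → 𝔤_λ*`:
`ω(e₋₁,·) = ω(e₀,·) = 0`, `ω(eᵢ,eⱼ) = ω(ěᵢ,ěⱼ) = 0`, `ω(eᵢ,ěⱼ) = δᵢⱼ`. -/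
def om (B : OscAlg n lam L) : L →ₗ[ℝ] Dual ℝ L :=
  ∑ i : Fin n, ((B.e' i).smulRight (B.f' i) - (B.f' i).smulRight (B.e' i))

/-- The derivation `J_a` of `𝔤_λ` given by `J_a(e₋₁) = J_a(e₀) = 0`, `J_a(eᵢ) = aᵢ ěᵢ`,
`J_a(ěᵢ) = −aᵢ eᵢ`. -/
def Ja (B : OscAlg n lam L) (a : Fin n → ℝ) : L →ₗ[ℝ] L :=
  B.basis.constr ℝ (Sum.elim (fun _ => (0 : L))
    (Sum.elim (fun i => a i • B.f i) (fun i => -(a i) • B.e i)))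

end OscAlg

section Bivectors

variable {L : Type} [LieRing L] [LieAlgebra ℝ L]

/-- `x ∧ y`, viewed as the linear map `𝔤* → 𝔤`, `α ↦ α(x) y − α(y) x`; this corresponds
to the skew-symmetric bilinear form `(α,β) ↦ α(x)β(y) − α(y)β(x)` on `𝔤*`. -/
def wedge (x y : L) : Dual ℝ L →ₗ[ℝ] L :=
  (Module.Dual.eval ℝ L x).smulRight y - (Module.Dual.eval ℝ L y).smulRight x

/-- A bivector `r ∈ ⋀²𝔤`, identified with the linear map `r_# : 𝔤* → 𝔤` of the
corresponding skew-symmetric bilinear form on `𝔤*` (so `r(α,β) = β(r_#(α))`). -/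
def IsBivector (r : Dual ℝ L →ₗ[ℝ] L) : Prop := ∀ α β : Dual ℝ L, α (r β) = - β (r α)

/-- The coadjoint action `ad*_u α := α ∘ ad_u`. -/
def coad (u : L) : Dual ℝ L →ₗ[ℝ] Dual ℝ L := (LieAlgebra.ad ℝ L u).dualMap

/-- `J† r` for an endomorphism `J` of `𝔤`; in terms of bilinear forms,
`(J† r)(α,β) = r(α∘J, β) + r(α, β∘J)`. -/
def dag (J : L →ₗ[ℝ] L) (r : Dual ℝ L →ₗ[ℝ] L) : Dual ℝ L →ₗ[ℝ] L :=
  r ∘ₗ J.dualMap + J ∘ₗ r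

/-- The adjoint action `ad_u† r` of `u ∈ 𝔤` on bivectors:
`(ad_u† r)(α,β) = r(ad*_u α, β) + r(α, ad*_u β)`. -/
def adDag (u : L) (r : Dual ℝ L →ₗ[ℝ] L) : Dual ℝ L →ₗ[ℝ] L :=
  dag (LieAlgebra.ad ℝ L u) r

/-- The Schouten bracket `[r,r]` of a bivector with itself:
`[r,r](α,β,γ) = 2α([r_#β, r_#γ]) + 2β([r_#γ, r_#α]) + 2γ([r_#α, r_#β])`. -/
def schouten (r : Dual ℝ L →ₗ[ℝ] L) (α β γ : Dual ℝ L) : ℝ :=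
  2 * α ⁅r β, r γ⁆ + 2 * β ⁅r γ, r α⁆ + 2 * γ ⁅r α, r β⁆

/-- `r` is a solution of the classical Yang–Baxter equation: `[r,r] = 0`. -/
def IsCYBE (r : Dual ℝ L →ₗ[ℝ] L) : Prop := ∀ α β γ : Dual ℝ L, schouten r α β γ = 0

/-- `r` is a solution of the generalized classical Yang–Baxter equation:
`ad_u [r,r] = 0` for all `u`. -/
def IsGCYBE (r : Dual ℝ L →ₗ[ℝ] L) : Prop :=
  ∀ (u : L) (α β γ : Dual ℝ L),
    schouten r (coad u α) β γ + schouten r α (coad u β) γ + schouten r α β (coad u γ) = 0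

/-- A derivation of the Lie algebra `L`. -/
def IsDerivation (J : L →ₗ[ℝ] L) : Prop := ∀ x y : L, J ⁅x, y⁆ = ⁅J x, y⁆ + ⁅x, J y⁆

/-- The 1-cocycle condition for `ξ : 𝔤 → ⋀²𝔤` with respect to the adjoint action:
`ξ([u,v]) = ad_u† ξ(v) − ad_v† ξ(u)`. -/
def IsCocycle (ξ : L →ₗ[ℝ] (Dual ℝ L →ₗ[ℝ] L)) : Prop :=
  ∀ u v : L, ξ ⁅u, v⁆ = adDag u (ξ v) - adDag v (ξ u)

/-- The dual bracket `[α,β]*` associated to `ξ : 𝔤 → ⋀²𝔤`: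
`[α,β]*(u) = ξ(u)(α,β)`. -/
def dualBr (ξ : L →ₗ[ℝ] (Dual ℝ L →ₗ[ℝ] L)) (α β : Dual ℝ L) : Dual ℝ L :=
  (β : L →ₗ[ℝ] ℝ) ∘ₗ (ξ.flip α)

/-- `ξ : 𝔤 → ⋀²𝔤` is a Lie bialgebra structure: `ξ` takes values in bivectors, is a
1-cocycle, and the dual bracket satisfies the Jacobi identity. -/
def IsBialgebra (ξ : L →ₗ[ℝ] (Dual ℝ L →ₗ[ℝ] L)) : Prop :=
  (∀ (u : L) (α β : Dual ℝ L), α (ξ u β) = - β (ξ u α)) ∧ IsCocycle ξ ∧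
  ∀ α β γ : Dual ℝ L,
    dualBr ξ (dualBr ξ α β) γ + dualBr ξ (dualBr ξ β γ) α + dualBr ξ (dualBr ξ γ α) β = 0

end Bivectors

namespace OscAlg

variable {n : ℕ} {lam : Fin n → ℝ} {L : Type} [LieRing L] [LieAlgebra ℝ L]

/-- Membership in `⋀²S`: a bivector `r` with `r_#(e₋₁*) = r_#(e₀*) = 0` and
`Im r_# ⊆ S`. -/
def InW2S (B : OscAlg n lam L) (r : Dual ℝ L →ₗ[ℝ] L) : Prop :=
  IsBivector r ∧ r B.em' = 0 ∧ r B.e0' = 0 ∧ ∀ α : Dual ℝ L, r α ∈ B.S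

/-- `ω_{r₁,r₂}(α,β) = (1/2)(ω(r₁_#(α), r₂_#(β)) + ω(r₂_#(α), r₁_#(β)))`. -/
def omPair (B : OscAlg n lam L) (r₁ r₂ : Dual ℝ L →ₗ[ℝ] L) (α β : Dual ℝ L) : ℝ :=
  (1/2) * (B.om (r₁ α) (r₂ β) + B.om (r₂ α) (r₁ β))

end OscAlg

/-- The dual bracket `[α,β]_r := ad*_{r_#(β)} α − ad*_{r_#(α)} β` on `𝔤*`. -/
def rBr {L : Type} [LieRing L] [LieAlgebra ℝ L]
    (r : Dual ℝ L →ₗ[ℝ] L) (α β : Dual ℝ L) : Dual ℝ L :=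
  coad (r β) α - coad (r α) β

/-- The derived series of `(𝔤*, [·,·]_r)`. -/
def rDerivedSeries {L : Type} [LieRing L] [LieAlgebra ℝ L]
    (r : Dual ℝ L →ₗ[ℝ] L) : ℕ → Submodule ℝ (Dual ℝ L)
  | 0 => ⊤
  | k + 1 => Submodule.span ℝ
      {x : Dual ℝ L | ∃ α ∈ rDerivedSeries r k, ∃ β ∈ rDerivedSeries r k, x = rBr r α β}

/-! The bracket `[α, β]_r` is bilinear and alternating, so the derived ideal is spanned by the
three brackets of dual basis vectors, which are read off from the values of `r` and the bracket
table of `sl(2, ℝ)`: `v₁₂ = -2a e₁* - c e₂*`, `v₁₃ = 2b e₁* - c e₃*`, `v₂₃ = 2b e₂* + 2a e₃*`.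
Expanding `[v, w]_r` for these three by bilinearity and the same table, every coefficient
cancels, so the derived ideal is abelian and the derived series stops at step 2. The three
vectors satisfy one linear relation, and unless `a = b = c = 0` two of them are independent:
`v₁₂, v₂₃` if `a ≠ 0`, `v₁₃, v₂₃` if `a = 0 ≠ b`, and `v₁₂, v₁₃` if `a = b = 0`. -/

section LinearAlgebra

variable {R M : Type*} [CommRing R] [AddCommGroup M] [Module R M]

theorem apply₂_eq_zero_of_mem_span (B : M →ₗ[R] M →ₗ[R] M) {s : Set M}
    (h : ∀ x ∈ s, ∀ y ∈ s, B x y = 0) :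
    ∀ x ∈ Submodule.span R s, ∀ y ∈ Submodule.span R s, B x y = 0 := by
  have hle : Submodule.map₂ B (Submodule.span R s) (Submodule.span R s) ≤ ⊥ := by
    rw [Submodule.map₂_span_span, Submodule.span_le]
    rintro _ ⟨x, hx, y, hy, rfl⟩
    exact h x hx y hy
  exact fun x hx y hy => (Submodule.mem_bot R).mp (Submodule.map₂_le.mp hle x hx y hy)

theorem span_apply₂_eq_span_basis_pairs {B : M →ₗ[R] M →ₗ[R] M} (hB : B.IsAlt)
    (ε : Basis (Fin 3) R M) :
    Submodule.span R {x | ∃ α β, x = B α β}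
      = Submodule.span R {B (ε 0) (ε 1), B (ε 0) (ε 2), B (ε 1) (ε 2)} := by
  set S := Submodule.span R {B (ε 0) (ε 1), B (ε 0) (ε 2), B (ε 1) (ε 2)}
  have hlt : ∀ i j, i < j → B (ε i) (ε j) ∈ S := by
    intro i j hij
    fin_cases i <;> fin_cases j <;> first
      | exact absurd hij (by decide)
      | exact Submodule.subset_span (by simp)
  have hpairs : ∀ i j, B (ε i) (ε j) ∈ S := by
    intro i j
    rcases lt_trichotomy i j with hij | rfl | hji
    · exact hlt i j hij
    · rw [hB.self_eq_zero]; exact S.zero_mem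
    · rw [← hB.neg]; exact S.neg_mem (hlt j i hji)
  refine le_antisymm (Submodule.span_le.mpr ?_) (Submodule.span_mono ?_)
  · rintro _ ⟨α, β, rfl⟩
    rw [← ε.sum_repr α, ← ε.sum_repr β]
    simp only [map_sum, map_smul, LinearMap.sum_apply, LinearMap.smul_apply]
    exact Submodule.sum_mem _ fun i _ => Submodule.smul_mem _ _ <|
      Submodule.sum_mem _ fun j _ => Submodule.smul_mem _ _ (hpairs j i)
  · rintro _ (rfl | rfl | rfl) <;> exact ⟨_, _, rfl⟩

theorem apply₂_eq_zero_of_sl2_dual_table {B : M →ₗ[R] M →ₗ[R] M} (hB : B.IsAlt)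
    (e : Fin 3 → M) (a b c : R)
    (h01 : B (e 0) (e 1) = (-(2 * a)) • e 0 - c • e 1)
    (h02 : B (e 0) (e 2) = (2 * b) • e 0 - c • e 2)
    (h12 : B (e 1) (e 2) = (2 * b) • e 1 + (2 * a) • e 2) :
    ∀ x ∈ ({B (e 0) (e 1), B (e 0) (e 2), B (e 1) (e 2)} : Set M),
      ∀ y ∈ ({B (e 0) (e 1), B (e 0) (e 2), B (e 1) (e 2)} : Set M), B x y = 0 := by
  have h10 := hB.neg (e 0) (e 1)
  have h21 := hB.neg (e 1) (e 2)
  rw [h01] at h10; rw [h12] at h21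
  obtain ⟨k0102, k0112, k0212⟩ : B (B (e 0) (e 1)) (B (e 0) (e 2)) = 0 ∧
      B (B (e 0) (e 1)) (B (e 1) (e 2)) = 0 ∧ B (B (e 0) (e 2)) (B (e 1) (e 2)) = 0 := by
    refine ⟨?_, ?_, ?_⟩ <;>
    · simp only [map_sub, map_add, map_smul, LinearMap.sub_apply,
        LinearMap.smul_apply, hB.self_eq_zero, h01, h02, h12, ← h10, ← h21]
      module
  rintro x (rfl | rfl | rfl) y (rfl | rfl | rfl) <;>
    first
      | exact hB.self_eq_zero _
      | assumption
      | exact hB.eq_iff.mp ‹_›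

end LinearAlgebra

theorem finrank_span_triple_eq_two {K V : Type*} [DivisionRing K] [AddCommGroup V]
    [Module K V] {u v w : V}
    (huw : LinearIndependent K ![u, w]) (hv : v ∈ Submodule.span K {u, w}) :
    Module.finrank K (Submodule.span K {v, u, w}) = 2 := by
  rw [Submodule.span_insert_eq_span hv, ← Matrix.range_cons_cons_empty, finrank_span_eq_card huw]
  simp

theorem finrank_span_sl2_dual_table {K V : Type*} [Field K] [CharZero K] [AddCommGroup V]
    [Module K V] (ε : Basis (Fin 3) K V) {a b c : K} (habc : ¬(a = 0 ∧ b = 0 ∧ c = 0)) :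
    Module.finrank K (Submodule.span K
      {(-(2 * a)) • ε 0 - c • ε 1, (2 * b) • ε 0 - c • ε 2, (2 * b) • ε 1 + (2 * a) • ε 2}) = 2 := by
  have coord : ∀ {x : V} k, x = 0 → ε.coord k x = 0 := fun k hx => by rw [hx, map_zero]
  by_cases ha : a = 0
  · subst ha
    by_cases hb : b = 0
    · subst hb
      have hc : c ≠ 0 := by simpa using habc
      rw [Set.pair_comm, Set.insert_comm]
      refine finrank_span_triple_eq_two ?_ (by simp)
      refine LinearIndependent.pair_iff.mpr fun s t hst => ⟨?_, ?_⟩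
      · simpa [hc] using coord 1 hst
      · simpa [hc] using coord 2 hst
    · refine finrank_span_triple_eq_two ?_ ?_
      · refine LinearIndependent.pair_iff.mpr fun s t hst => ⟨?_, ?_⟩
        · simpa [hb] using coord 0 hst
        · simpa [hb] using coord 1 hst
      · refine Submodule.mem_span_pair.mpr ⟨0, -(c / (2 * b)), ?_⟩
        match_scalars <;> simp [hb]
  · rw [Set.insert_comm]
    refine finrank_span_triple_eq_two ?_ ?_
    · refine LinearIndependent.pair_iff.mpr fun s t hst => ⟨?_, ?_⟩
      · simpa [ha] using coord 0 hst
      · simpa [ha] using coord 2 hst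
    · refine Submodule.mem_span_pair.mpr ⟨-(b / a), -(c / (2 * a)), ?_⟩
      match_scalars <;> field_simp
      ring

section DualBracket

variable {L : Type} [LieRing L] [LieAlgebra ℝ L]

theorem rBr_apply (r : Dual ℝ L →ₗ[ℝ] L) (α β : Dual ℝ L) (x : L) :
    rBr r α β x = α ⁅r β, x⁆ - β ⁅r α, x⁆ :=
  rfl

def rBrₗ (r : Dual ℝ L →ₗ[ℝ] L) : Dual ℝ L →ₗ[ℝ] Dual ℝ L →ₗ[ℝ] Dual ℝ L :=
  LinearMap.mk₂ ℝ (rBr r)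
    (fun α α' β => by
      ext x; simp only [rBr_apply, LinearMap.add_apply, map_add, add_lie]; ring)
    (fun s α β => by
      ext x; simp only [rBr_apply, LinearMap.smul_apply, smul_eq_mul, map_smul, smul_lie]; ring)
    (fun α β β' => by
      ext x; simp only [rBr_apply, LinearMap.add_apply, map_add, add_lie]; ring)
    (fun s α β => by
      ext x; simp only [rBr_apply, LinearMap.smul_apply, smul_eq_mul, map_smul, smul_lie]; ring)

theorem rBrₗ_apply (r : Dual ℝ L →ₗ[ℝ] L) (α β : Dual ℝ L) : rBrₗ r α β = rBr r α β :=
  rfl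

theorem isAlt_rBrₗ (r : Dual ℝ L →ₗ[ℝ] L) : (rBrₗ r).IsAlt := fun α => by
  ext x; simp [rBrₗ_apply, rBr_apply]

theorem rDerivedSeries_two_eq_bot {r : Dual ℝ L →ₗ[ℝ] L}
    (h : ∀ x ∈ Submodule.span ℝ {x : Dual ℝ L | ∃ α β : Dual ℝ L, x = rBr r α β},
      ∀ y ∈ Submodule.span ℝ {x : Dual ℝ L | ∃ α β : Dual ℝ L, x = rBr r α β}, rBr r x y = 0) :
    rDerivedSeries r 2 = ⊥ := by
  have h1 : rDerivedSeries r 1 = Submodule.span ℝ {x | ∃ α β : Dual ℝ L, x = rBr r α β} := by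
    simp [rDerivedSeries]
  rw [rDerivedSeries, Submodule.span_eq_bot, h1]
  rintro _ ⟨α, hα, β, hβ, rfl⟩
  exact h α hα β hβ

end DualBracket

theorem rBr_coord_sl2 {L : Type} [LieRing L] [LieAlgebra ℝ L] (Bb : Basis (Fin 3) ℝ L)
    (h12 : ⁅Bb 0, Bb 1⁆ = (2 : ℝ) • Bb 1)
    (h13 : ⁅Bb 0, Bb 2⁆ = (-2 : ℝ) • Bb 2)
    (h23 : ⁅Bb 1, Bb 2⁆ = -Bb 0)
    (a b c : ℝ) (r : Dual ℝ L →ₗ[ℝ] L)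
    (h1 : r (Bb.coord 0) = -a • Bb 1 - b • Bb 2)
    (h2 : r (Bb.coord 1) = a • Bb 0 - c • Bb 2)
    (h3 : r (Bb.coord 2) = b • Bb 0 + c • Bb 1) :
    rBr r (Bb.coord 0) (Bb.coord 1) = (-(2 * a)) • Bb.coord 0 - c • Bb.coord 1 ∧
    rBr r (Bb.coord 0) (Bb.coord 2) = (2 * b) • Bb.coord 0 - c • Bb.coord 2 ∧
    rBr r (Bb.coord 1) (Bb.coord 2) = (2 * b) • Bb.coord 1 + (2 * a) • Bb.coord 2 := by
  have h21 : ⁅Bb 1, Bb 0⁆ = (-2 : ℝ) • Bb 1 := by rw [← lie_skew, h12]; module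
  have h31 : ⁅Bb 2, Bb 0⁆ = (2 : ℝ) • Bb 2 := by rw [← lie_skew, h13]; module
  have h32 : ⁅Bb 2, Bb 1⁆ = Bb 0 := by rw [← lie_skew, h23]; module
  refine ⟨?_, ?_, ?_⟩ <;> refine Bb.ext fun k => ?_ <;> fin_cases k <;>
    simp [rBr_apply, h1, h2, h3, sub_lie, add_lie, smul_lie, h12, h13, h23, h21, h31, h32,
      Basis.coord_apply] <;> ring

theorem sl2_dual_bracket_solvable_general
    {L : Type} [LieRing L] [LieAlgebra ℝ L]
    (Bb : Basis (Fin 3) ℝ L)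
    (h12 : ⁅Bb 0, Bb 1⁆ = (2 : ℝ) • Bb 1)
    (h13 : ⁅Bb 0, Bb 2⁆ = (-2 : ℝ) • Bb 2)
    (h23 : ⁅Bb 1, Bb 2⁆ = -Bb 0)
    (a b c : ℝ)
    (r : Dual ℝ L →ₗ[ℝ] L)
    (h1 : r (Bb.coord 0) = -a • Bb 1 - b • Bb 2)
    (h2 : r (Bb.coord 1) = a • Bb 0 - c • Bb 2)
    (h3 : r (Bb.coord 2) = b • Bb 0 + c • Bb 1) :
    rBr r (Bb.coord 0) (Bb.coord 1)
        = (-(2 * a)) • (Bb.coord 0 : Dual ℝ L) - c • (Bb.coord 1 : Dual ℝ L) ∧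
    rBr r (Bb.coord 0) (Bb.coord 2)
        = (2 * b) • (Bb.coord 0 : Dual ℝ L) - c • (Bb.coord 2 : Dual ℝ L) ∧
    rBr r (Bb.coord 1) (Bb.coord 2)
        = (2 * b) • (Bb.coord 1 : Dual ℝ L) + (2 * a) • (Bb.coord 2 : Dual ℝ L) ∧
    (¬(a = 0 ∧ b = 0 ∧ c = 0) →
      (∀ x ∈ Submodule.span ℝ {x : Dual ℝ L | ∃ α β : Dual ℝ L, x = rBr r α β},
        ∀ y ∈ Submodule.span ℝ {x : Dual ℝ L | ∃ α β : Dual ℝ L, x = rBr r α β},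
          rBr r x y = 0) ∧
      Module.finrank ℝ
        (Submodule.span ℝ {x : Dual ℝ L | ∃ α β : Dual ℝ L, x = rBr r α β}) = 2 ∧
      ∃ k : ℕ, rDerivedSeries r k = ⊥) := by
  obtain ⟨e01, e02, e12⟩ := rBr_coord_sl2 Bb h12 h13 h23 a b c r h1 h2 h3
  refine ⟨e01, e02, e12, fun hne => ?_⟩
  set D := Submodule.span ℝ {x : Dual ℝ L | ∃ α β : Dual ℝ L, x = rBr r α β}
  have hD : D = Submodule.span ℝ {rBr r (Bb.coord 0) (Bb.coord 1),
      rBr r (Bb.coord 0) (Bb.coord 2), rBr r (Bb.coord 1) (Bb.coord 2)} := by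
    simpa only [Basis.coe_dualBasis, rBrₗ_apply] using
      span_apply₂_eq_span_basis_pairs (isAlt_rBrₗ r) Bb.dualBasis
  have habel : ∀ x ∈ D, ∀ y ∈ D, rBr r x y = 0 := by
    rw [hD]
    exact apply₂_eq_zero_of_mem_span (rBrₗ r)
      (apply₂_eq_zero_of_sl2_dual_table (isAlt_rBrₗ r) Bb.coord a b c e01 e02 e12)
  refine ⟨habel, ?_, 2, rDerivedSeries_two_eq_bot habel⟩
  rw [hD, e01, e02, e12]
  exact Bb.coe_dualBasis ▸ finrank_span_sl2_dual_table Bb.dualBasis hne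

/-- **Example (sl(2,ℝ), dual Lie algebra).** With `𝔤 = sl(2,ℝ)`, `4ab + c² = 0` and the
Yang–Baxter solution `r` as above, the dual bracket satisfies
`[e₁*, e₂*]_r = −2a e₁* − c e₂*`, `[e₁*, e₃*]_r = 2b e₁* − c e₃*`,
`[e₂*, e₃*]_r = 2b e₂* + 2a e₃*`; moreover if `(a,b,c) ≠ (0,0,0)` then the derived
ideal `[𝔤*, 𝔤*]_r` is abelian of dimension `2`, and `(𝔤*, [·,·]_r)` is solvable. -/
theorem sl2_dual_bracket_solvable
    {L : Type} [LieRing L] [LieAlgebra ℝ L]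
    (Bb : Basis (Fin 3) ℝ L)
    (h12 : ⁅Bb 0, Bb 1⁆ = (2 : ℝ) • Bb 1)
    (h13 : ⁅Bb 0, Bb 2⁆ = (-2 : ℝ) • Bb 2)
    (h23 : ⁅Bb 1, Bb 2⁆ = -Bb 0)
    (a b c : ℝ) (habc : 4 * a * b + c ^ 2 = 0)
    (r : Dual ℝ L →ₗ[ℝ] L)
    (hskew : IsBivector r)
    (h1 : r (Bb.coord 0) = -a • Bb 1 - b • Bb 2)
    (h2 : r (Bb.coord 1) = a • Bb 0 - c • Bb 2)
    (h3 : r (Bb.coord 2) = b • Bb 0 + c • Bb 1)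
    (hcybe : ∀ α β γ : Dual ℝ L, γ ⁅r α, r β⁆ + α ⁅r β, r γ⁆ + β ⁅r γ, r α⁆ = 0) :
    rBr r (Bb.coord 0) (Bb.coord 1)
        = (-(2 * a)) • (Bb.coord 0 : Dual ℝ L) - c • (Bb.coord 1 : Dual ℝ L) ∧
    rBr r (Bb.coord 0) (Bb.coord 2)
        = (2 * b) • (Bb.coord 0 : Dual ℝ L) - c • (Bb.coord 2 : Dual ℝ L) ∧
    rBr r (Bb.coord 1) (Bb.coord 2)
        = (2 * b) • (Bb.coord 1 : Dual ℝ L) + (2 * a) • (Bb.coord 2 : Dual ℝ L) ∧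
    (¬(a = 0 ∧ b = 0 ∧ c = 0) →
      (∀ x ∈ Submodule.span ℝ {x : Dual ℝ L | ∃ α β : Dual ℝ L, x = rBr r α β},
        ∀ y ∈ Submodule.span ℝ {x : Dual ℝ L | ∃ α β : Dual ℝ L, x = rBr r α β},
          rBr r x y = 0) ∧
      Module.finrank ℝ
        (Submodule.span ℝ {x : Dual ℝ L | ∃ α β : Dual ℝ L, x = rBr r α β}) = 2 ∧
      ∃ k : ℕ, rDerivedSeries r k = ⊥) :=
  sl2_dual_bracket_solvable_general Bb h12 h13 h23 a b c r h1 h2 h3
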